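/- Let d_n denote the minimum value of Δ_CS = C - S over all rooted binary trees with n leaves. Then d_0 = d_1 = 0, and for all n ≥ 1: d_{2n} = 2·d_n - 2n and d_{2n+1} = d_{n+1} + d_n - 2n. -/

import Mathlib

/-- Rooted binary trees: a leaf, or an internal vertex with two child subtrees. -/
inductive BTree where
  | leaf : BTree
  | node : BTree → BTree → BTree
deriving DecidableEq

namespace BTree

/-- Number of leaves of a rooted binary tree. -/
def numLeaves : BTree → ℕ
  | leaf => 1
  | node l r => numLeaves l + numLeaves r

/-- Sackin index: sum over internal vertices `v` of `n_{v_a} + n_{v_b}`. -/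
def sackin : BTree → ℕ
  | leaf => 0
  | node l r => sackin l + sackin r + (numLeaves l + numLeaves r)

/-- Colless index: sum over internal vertices `v` of `|n_{v_a} - n_{v_b}|`. -/
def colless : BTree → ℕ
  | leaf => 0
  | node l r =>
      colless l + colless r +
        (max (numLeaves l) (numLeaves r) - min (numLeaves l) (numLeaves r))

/-- `N_a`: sum over internal vertices of the larger child-subtree leaf count. -/
def Na : BTree → ℕ
  | leaf => 0
  | node l r => Na l + Na r + max (numLeaves l) (numLeaves r)

/-- `N_b`: sum over internal vertices of the smaller child-subtree leaf count. -/
def Nb : BTree → ℕ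
  | leaf => 0
  | node l r => Nb l + Nb r + min (numLeaves l) (numLeaves r)

/-- `Δ_CS = C - S`, as an integer. -/
def deltaCS (T : BTree) : ℤ := (colless T : ℤ) - (sackin T : ℤ)

/-- Caterpillar trees: every internal vertex has at least one leaf child. -/
def isCaterpillar : BTree → Prop
  | leaf => True
  | node l r => (l = leaf ∧ isCaterpillar r) ∨ (r = leaf ∧ isCaterpillar l)

/-- The fully balanced tree of height `h`. -/
def fbTree : ℕ → BTree
  | 0 => leaf
  | h + 1 => node (fbTree h) (fbTree h)

end BTree

/-!
Since `C = N_a - N_b` and `S = N_a + N_b`, we have `Δ_CS = -2 N_b`, so `d_n = -2 max N_b`.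
The maximum of `N_b` over trees with `n` leaves is attained by the maximally balanced tree.
Its value `g n` satisfies `g (2n) = 2 g n + n` and `g (2n+1) = g (n+1) + g n + n`, and any
such `g` satisfies `g a + g b + min a b ≤ g (a + b)` (induction on `a + b` through the
parities of `a` and `b`); by induction on the tree this bounds `N_b` of every tree by `g n`.
-/

theorem add_add_min_le_of_binary_recursion {g : ℕ → ℕ}
    (h_even : ∀ n, g (2 * n) = 2 * g n + n)
    (h_odd : ∀ n, g (2 * n + 1) = g (n + 1) + g n + n) (a b : ℕ) :
    g a + g b + min a b ≤ g (a + b) := by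
  induction h : a + b using Nat.strong_induction_on generalizing a b with
  | _ m ih =>
  subst h
  have g_zero : g 0 = 0 := by
    have h := h_even 0
    simp only [mul_zero, add_zero] at h
    omega
  rcases Nat.eq_zero_or_pos a with rfl | ha
  · simp [g_zero]
  rcases Nat.eq_zero_or_pos b with rfl | hb
  · simp [g_zero]
  obtain ⟨a, rfl | rfl⟩ := Nat.even_or_odd' a <;> obtain ⟨b, rfl | rfl⟩ := Nat.even_or_odd' b
  · have := ih (a + b) (by omega) a b rfl
    rw [show 2 * a + 2 * b = 2 * (a + b) by ring, h_even, h_even, h_even]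
    omega
  · have h₁ := ih (a + b + 1) (by omega) a (b + 1) rfl
    have h₂ := ih (a + b) (by omega) a b rfl
    rw [show 2 * a + (2 * b + 1) = 2 * (a + b) + 1 by ring, h_even, h_odd, h_odd]
    omega
  · have h₁ := ih (a + b + 1) (by omega) (a + 1) b (by ring)
    have h₂ := ih (a + b) (by omega) a b rfl
    rw [show 2 * a + 1 + 2 * b = 2 * (a + b) + 1 by ring, h_even, h_odd, h_odd]
    omega
  · have h₁ := ih (a + b + 1) (by omega) a (b + 1) rfl
    have h₂ := ih (a + b + 1) (by omega) (a + 1) b (by ring)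
    rw [show 2 * a + 1 + (2 * b + 1) = 2 * (a + b + 1) by ring, h_even, h_odd, h_odd]
    omega

namespace BTree

theorem colless_add_Nb (T : BTree) : colless T + Nb T = Na T := by
  induction T with
  | leaf => rfl
  | node l r _ _ => simp only [colless, Na, Nb]; omega

theorem sackin_eq_Na_add_Nb (T : BTree) : sackin T = Na T + Nb T := by
  induction T with
  | leaf => rfl
  | node l r _ _ => simp only [sackin, Na, Nb]; omega

theorem deltaCS_eq_neg_two_mul_Nb (T : BTree) : deltaCS T = -2 * Nb T := by
  have := colless_add_Nb T
  rw [deltaCS, sackin_eq_Na_add_Nb]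
  omega

def balanced : ℕ → BTree
  | 0 | 1 => leaf
  | n + 2 => node (balanced ((n + 3) / 2)) (balanced ((n + 2) / 2))

@[simp]
theorem balanced_zero : balanced 0 = leaf := by rw [balanced]

@[simp]
theorem balanced_one : balanced 1 = leaf := by rw [balanced]

theorem numLeaves_balanced {n : ℕ} (hn : n ≠ 0) : numLeaves (balanced n) = n := by
  induction n using Nat.strong_induction_on with
  | _ n ih =>
  match n with
  | 1 => simp [numLeaves]
  | n + 2 =>
    rw [balanced, numLeaves, ih _ (by omega) (by omega), ih _ (by omega) (by omega)]
    omega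

theorem Nb_balanced_two_mul (n : ℕ) :
    Nb (balanced (2 * n)) = 2 * Nb (balanced n) + n := by
  match n with
  | 0 => simp [Nb]
  | n + 1 =>
    rw [show 2 * (n + 1) = 2 * n + 2 by ring, balanced, Nb,
      show (2 * n + 3) / 2 = n + 1 by omega, show (2 * n + 2) / 2 = n + 1 by omega,
      numLeaves_balanced (by omega)]
    omega

theorem Nb_balanced_two_mul_add_one (n : ℕ) :
    Nb (balanced (2 * n + 1)) = Nb (balanced (n + 1)) + Nb (balanced n) + n := by
  match n with
  | 0 => simp [Nb]
  | n + 1 =>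
    rw [show 2 * (n + 1) + 1 = 2 * n + 1 + 2 by ring, balanced, Nb,
      show (2 * n + 1 + 3) / 2 = n + 1 + 1 by omega, show (2 * n + 1 + 2) / 2 = n + 1 by omega,
      numLeaves_balanced (by omega), numLeaves_balanced (by omega)]
    omega

theorem Nb_le_Nb_balanced (T : BTree) : Nb T ≤ Nb (balanced T.numLeaves) := by
  induction T with
  | leaf => simp [Nb]
  | node l r ihl ihr =>
    have := add_add_min_le_of_binary_recursion (g := fun n => Nb (balanced n))
      Nb_balanced_two_mul Nb_balanced_two_mul_add_one l.numLeaves r.numLeaves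
    simp only [Nb, numLeaves]
    omega

theorem isLeast_deltaCS {n : ℕ} (hn : n ≠ 0) :
    IsLeast {x : ℤ | ∃ T : BTree, numLeaves T = n ∧ deltaCS T = x} (-2 * Nb (balanced n)) := by
  refine ⟨⟨balanced n, numLeaves_balanced hn, deltaCS_eq_neg_two_mul_Nb _⟩, ?_⟩
  rintro _ ⟨T, rfl, rfl⟩
  have := Nb_le_Nb_balanced T
  rw [deltaCS_eq_neg_two_mul_Nb]
  omega

end BTree

open BTree in
theorem deltaCS_min_recursion_general (d : ℕ → ℤ)
    (hmin : ∀ n : ℕ, 1 ≤ n →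
      IsLeast {x : ℤ | ∃ T : BTree, numLeaves T = n ∧ deltaCS T = x} (d n)) :
    d 1 = 0 ∧ ∀ n : ℕ, 1 ≤ n →
      d (2 * n) = 2 * d n - 2 * (n : ℤ) ∧
      d (2 * n + 1) = d (n + 1) + d n - 2 * (n : ℤ) := by
  have hd : ∀ n, 1 ≤ n → d n = -2 * Nb (balanced n) := fun n hn =>
    (hmin n hn).unique (isLeast_deltaCS (by omega))
  refine ⟨by simp [hd 1 le_rfl, Nb], fun n hn => ⟨?_, ?_⟩⟩
  · rw [hd _ (by omega), hd n hn, Nb_balanced_two_mul]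
    push_cast
    ring
  · rw [hd _ (by omega), hd _ (by omega), hd n hn, Nb_balanced_two_mul_add_one]
    push_cast
    ring

open BTree in
/-- the minimum `d_n` of `Δ_CS` over trees with `n` leaves (with the
convention `d_0 = 0` for the empty tree) satisfies `d_1 = 0`,
`d_{2n} = 2d_n - 2n` and `d_{2n+1} = d_{n+1} + d_n - 2n` for all `n ≥ 1`. -/
theorem deltaCS_min_recursion (d : ℕ → ℤ) (h0 : d 0 = 0)
    (hmin : ∀ n : ℕ, 1 ≤ n →
      IsLeast {x : ℤ | ∃ T : BTree, numLeaves T = n ∧ deltaCS T = x} (d n)) :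
    d 1 = 0 ∧ ∀ n : ℕ, 1 ≤ n →
      d (2 * n) = 2 * d n - 2 * (n : ℤ) ∧
      d (2 * n + 1) = d (n + 1) + d n - 2 * (n : ℤ) :=
  deltaCS_min_recursion_general d hmin
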